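/- For the SCAD penalty with parameters λ > 0 and a > 2, the function t ↦ ρ_λ(t) + t²/(2(a−1)) is convex on ℝ, and ρ_λ is differentiable on ℝ \ {0} with ρ'_λ(t) = 0 for all t ≥ aλ. -/

import Mathlib

/-!
Writing `ρ_λ(t) = scad λ a |t|`, the profile `scad λ a` is `C¹` on `ℝ`: its three pieces and
their derivatives agree at the knots `λ` and `aλ`. Adding `x² / (2(a-1))` to it turns its
derivative into `x ↦ scadDeriv λ a x + x / (a-1)`, which is monotone (it is constant on the
middle piece and increasing elsewhere) and nonnegative on `[0, ∞)`. Hence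
`x ↦ scad λ a x + x² / (2(a-1))` is convex and monotone on `[0, ∞)`, and composing it with the
convex function `|·|` gives the convexity claim.
-/

open Set Filter Topology

theorem HasDerivAt.ite_le {f g : ℝ → ℝ} {f' g' c x : ℝ} (hf : HasDerivAt f f' x)
    (hg : HasDerivAt g g' x) (hc : x = c → f c = g c ∧ f' = g') :
    HasDerivAt (fun y => if y ≤ c then f y else g y) (if x ≤ c then f' else g') x := by
  rcases lt_trichotomy x c with hx | rfl | hx
  · rw [if_pos hx.le]
    refine hf.congr_of_eventuallyEq ?_
    filter_upwards [Iio_mem_nhds hx] with y (hy : y < c)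
    rw [if_pos hy.le]
  · obtain ⟨hfg, rfl⟩ := hc rfl
    rw [if_pos le_rfl]
    have hleft : HasDerivWithinAt (fun y => if y ≤ x then f y else g y) f' (Iic x) x :=
      hf.hasDerivWithinAt.congr_of_mem (fun y (hy : y ≤ x) => if_pos hy) self_mem_Iic
    have hright : HasDerivWithinAt (fun y => if y ≤ x then f y else g y) f' (Ici x) x := by
      refine hg.hasDerivWithinAt.congr_of_mem (fun y (hy : x ≤ y) => ?_) self_mem_Ici
      rcases hy.eq_or_lt with rfl | hy
      · rw [if_pos le_rfl, hfg]
      · rw [if_neg hy.not_ge]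
    simpa only [Iic_union_Ici, hasDerivWithinAt_univ] using hleft.union hright
  · rw [if_neg hx.not_ge]
    refine hg.congr_of_eventuallyEq ?_
    filter_upwards [Ioi_mem_nhds hx] with y (hy : c < y)
    rw [if_neg hy.not_ge]

theorem ConvexOn.comp_abs {g : ℝ → ℝ} (hg : ConvexOn ℝ (Ici 0) g) (hg' : MonotoneOn g (Ici 0)) :
    ConvexOn ℝ univ (fun t => g |t|) := by
  have hrange : (norm : ℝ → ℝ) '' univ = Ici 0 := by rw [image_univ, range_norm]
  rw [← hrange] at hg hg'
  exact hg.comp (convexOn_norm convex_univ) hg'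

noncomputable def scad (lam a x : ℝ) : ℝ :=
  if x ≤ lam then lam * x
  else if x ≤ a * lam then -(x ^ 2 - 2 * a * lam * x + lam ^ 2) / (2 * (a - 1))
  else (a + 1) * lam ^ 2 / 2

noncomputable def scadDeriv (lam a x : ℝ) : ℝ :=
  if x ≤ lam then lam else if x ≤ a * lam then (a * lam - x) / (a - 1) else 0

section

variable {lam a : ℝ}

theorem hasDerivAt_scad (hlam : 0 ≤ lam) (ha : 1 < a) (x : ℝ) :
    HasDerivAt (scad lam a) (scadDeriv lam a x) x := by
  have ha₁ : a - 1 ≠ 0 := sub_ne_zero.mpr ha.ne'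
  have hknot : lam ≤ a * lam := le_mul_of_one_le_left hlam ha.le
  have hquad : HasDerivAt (fun x => -(x ^ 2 - 2 * a * lam * x + lam ^ 2) / (2 * (a - 1)))
      ((a * lam - x) / (a - 1)) x := by
    refine HasDerivAt.congr_deriv ((((hasDerivAt_pow 2 x).sub
      ((hasDerivAt_id' x).const_mul (2 * a * lam))).add_const (lam ^ 2)).neg.div_const _) ?_
    field_simp
    ring
  have hlin : HasDerivAt (fun x => lam * x) lam x := by
    simpa using (hasDerivAt_id' x).const_mul lam
  unfold scad scadDeriv
  refine hlin.ite_le (hquad.ite_le (hasDerivAt_const x _) fun hx => ?_) fun hx => ?_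
  · rw [hx, sub_self, zero_div]
    exact ⟨by field_simp; ring, rfl⟩
  · rw [hx, if_pos hknot, if_pos hknot]
    exact ⟨by field_simp; ring, by field_simp⟩

theorem scadDeriv_nonneg (hlam : 0 ≤ lam) (ha : 1 < a) (x : ℝ) : 0 ≤ scadDeriv lam a x := by
  have ha₁ : 0 < a - 1 := sub_pos.mpr ha
  unfold scadDeriv
  split_ifs with h₁ h₂
  · exact hlam
  · exact div_nonneg (sub_nonneg.mpr h₂) ha₁.le
  · exact le_rfl

theorem monotone_scadDeriv_add_div (ha : 1 < a) :
    Monotone (fun x => scadDeriv lam a x + x / (a - 1)) := by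
  have ha₁ : 0 < a - 1 := sub_pos.mpr ha
  intro x y hxy
  simp only [scadDeriv]
  rw [← sub_nonneg]
  split_ifs <;> field_simp <;> nlinarith

theorem scadDeriv_eq_zero_of_le (hlam : 0 < lam) (ha : 1 < a) {x : ℝ} (hx : a * lam ≤ x) :
    scadDeriv lam a x = 0 := by
  have hx' : lam < x := (lt_mul_of_one_lt_left hlam ha).trans_le hx
  rw [scadDeriv, if_neg hx'.not_ge]
  rcases hx.eq_or_lt with rfl | hx
  · rw [if_pos le_rfl, sub_self, zero_div]
  · rw [if_neg hx.not_ge]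

theorem hasDerivAt_scad_add_sq (hlam : 0 ≤ lam) (ha : 1 < a) (x : ℝ) :
    HasDerivAt (fun x => scad lam a x + x ^ 2 / (2 * (a - 1)))
      (scadDeriv lam a x + x / (a - 1)) x := by
  have ha₁ : a - 1 ≠ 0 := sub_ne_zero.mpr ha.ne'
  refine ((hasDerivAt_scad hlam ha x).add ((hasDerivAt_pow 2 x).div_const _)).congr_deriv ?_
  field_simp
  ring

theorem convexOn_scad_add_sq (hlam : 0 ≤ lam) (ha : 1 < a) :
    ConvexOn ℝ univ (fun x => scad lam a x + x ^ 2 / (2 * (a - 1))) := by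
  have hd := hasDerivAt_scad_add_sq hlam ha
  refine Monotone.convexOn_univ_of_deriv (fun x => (hd x).differentiableAt) ?_
  rw [funext fun x => (hd x).deriv]
  exact monotone_scadDeriv_add_div ha

theorem monotoneOn_scad_add_sq (hlam : 0 ≤ lam) (ha : 1 < a) :
    MonotoneOn (fun x => scad lam a x + x ^ 2 / (2 * (a - 1))) (Ici 0) := by
  have ha₁ : 0 < a - 1 := sub_pos.mpr ha
  have hscad : Monotone (scad lam a) :=
    monotone_of_hasDerivAt_nonneg (hasDerivAt_scad hlam ha) (scadDeriv_nonneg hlam ha)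
  refine (hscad.monotoneOn _).add fun x (hx : 0 ≤ x) y _ hxy => ?_
  gcongr

end

/-- SCAD penalty: ρ(t) + t²/(2(a−1)) is convex, ρ is differentiable off 0,
and its derivative vanishes for t ≥ aλ. -/
theorem scad_properties (lam a : ℝ) (hlam : 0 < lam) (ha : 2 < a) (ρ : ℝ → ℝ)
    (hρ : ∀ t, ρ t = if |t| ≤ lam then lam * |t|
      else if |t| ≤ a * lam then -(t ^ 2 - 2 * a * lam * |t| + lam ^ 2) / (2 * (a - 1))
      else (a + 1) * lam ^ 2 / 2) :
    ConvexOn ℝ Set.univ (fun t => ρ t + t ^ 2 / (2 * (a - 1))) ∧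
    (∀ t ≠ (0 : ℝ), DifferentiableAt ℝ ρ t) ∧
    ∀ t, a * lam ≤ t → deriv ρ t = 0 := by
  have ha₁ : 1 < a := by linarith
  have hρ_abs : ρ = fun t => scad lam a |t| := funext fun t => by rw [hρ, scad, sq_abs]
  refine ⟨?_, fun t ht => ?_, fun t ht => ?_⟩
  · simpa only [hρ_abs, sq_abs] using
      ConvexOn.comp_abs (convexOn_scad_add_sq hlam.le ha₁ |>.subset (subset_univ _)
        (convex_Ici 0)) (monotoneOn_scad_add_sq hlam.le ha₁)
  · rw [hρ_abs]
    exact (hasDerivAt_scad hlam.le ha₁ |t|).differentiableAt.comp t (differentiableAt_abs ht)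
  · have ht₀ : 0 < t := (mul_pos (by linarith) hlam).trans_le ht
    have hρ_eq : ρ =ᶠ[𝓝 t] scad lam a := by
      filter_upwards [Ioi_mem_nhds ht₀] with s (hs : 0 < s)
      simp only [hρ_abs, abs_of_pos hs]
    rw [hρ_eq.deriv_eq, (hasDerivAt_scad hlam.le ha₁ t).deriv, scadDeriv_eq_zero_of_le hlam ha₁ ht]
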